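/- arXiv:1612.07580 — 3 statements merged into one kernel-verified Lean document; each statement's English description precedes it below -/
import Mathlib

section
/- Let L : ℝ → ℝ be a C^∞ function with L'(ω) > 0 for every ω, lim_{ω→−∞} L(ω) = 0 and lim_{ω→+∞} L(ω) = +∞. For each integer k ≥ 1 let ω_k be the unique real number with L(ω_k) = 2πk. Then for every smooth compactly supported function φ : ℝ → ℂ, the symmetric partial sums ∑_{N=−M}^{M} ∫_ℝ e^{−i N L(ω)} φ(ω) dω converge as M → ∞ to 2π ∑_{k≥1} φ(ω_k)/L'(ω_k) (the latter sum having only finitely many nonzero terms). -/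
open Filter MeasureTheory Complex
open scoped FourierTransform Real

/-- Norm bound for the 1D Fourier integral. -/
lemma aux_norm_fourier_le (g : ℝ → ℂ) (x : ℝ) :
    ‖𝓕 g x‖ ≤ ∫ y : ℝ, ‖g y‖ := by
  rw [Real.fourier_real_eq]
  refine (norm_integral_le_integral_norm _).trans (le_of_eq ?_)
  simp [Circle.norm_smul]

lemma aux_summable_fourier {f : ℝ → ℂ} (hf : ContDiff ℝ (⊤ : ℕ∞) f)
    (hsupp : HasCompactSupport f) :
    Summable fun n : ℤ => 𝓕 f n := by
  have hd : Differentiable ℝ f := hf.differentiable (by simp)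
  have hf1 : ContDiff ℝ (⊤ : ℕ∞) (deriv f) := (contDiff_infty_iff_deriv.mp hf).2
  have hs1 : HasCompactSupport (deriv f) := hsupp.deriv
  have hd1 : Differentiable ℝ (deriv f) := hf1.differentiable (by simp)
  have hf2 : ContDiff ℝ (⊤ : ℕ∞) (deriv (deriv f)) := (contDiff_infty_iff_deriv.mp hf1).2
  have hint : Integrable f := hf.continuous.integrable_of_hasCompactSupport hsupp
  have hint1 : Integrable (deriv f) := hf1.continuous.integrable_of_hasCompactSupport hs1
  have hint2 : Integrable (deriv (deriv f)) :=
    hf2.continuous.integrable_of_hasCompactSupport hs1.deriv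
  have hkey : ∀ x : ℝ, 𝓕 (deriv (deriv f)) x
      = (2 * π * I * x) • ((2 * π * I * x) • 𝓕 f x) := by
    intro x
    have e1 := Real.fourier_deriv hint hd hint1
    have e2 := Real.fourier_deriv hint1 hd1 hint2
    rw [congrFun e2 x, congrFun e1 x]
  set C := ∫ y : ℝ, ‖deriv (deriv f) y‖ with hCdef
  have hC0 : 0 ≤ C := integral_nonneg fun y => norm_nonneg _
  apply summable_of_isBigO (Real.summable_abs_int_rpow one_lt_two)
  rw [Asymptotics.isBigO_iff]
  refine ⟨C, ?_⟩
  filter_upwards [eventually_cofinite_ne (0 : ℤ)] with n hn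
  have hn' : ((n : ℝ)) ≠ 0 := Int.cast_ne_zero.mpr hn
  have habs : (0:ℝ) < |(n:ℝ)| := abs_pos.mpr hn'
  have hb : ‖𝓕 (deriv (deriv f)) n‖ ≤ C :=
    aux_norm_fourier_le (deriv (deriv f)) n
  rw [hkey n] at hb
  have hnorm : ‖(2 * π * I * (n:ℝ)) • ((2 * π * I * (n:ℝ)) • 𝓕 f n)‖
      = (2 * π * |(n:ℝ)|)^2 * ‖𝓕 f n‖ := by
    rw [norm_smul, norm_smul]
    have : ‖(2 * ↑π * I * (n:ℝ) : ℂ)‖ = 2 * π * |(n:ℝ)| := by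
      simp [norm_mul, Complex.norm_real, Real.norm_eq_abs, abs_of_pos Real.pi_pos]
    rw [this]; ring
  rw [hnorm] at hb
  have hrpow : ‖|(n:ℝ)| ^ (-2 : ℝ)‖ = (|(n:ℝ)|^2)⁻¹ := by
    have he : |(n:ℝ)| ^ (-2:ℝ) = (|(n:ℝ)|^(2:ℕ))⁻¹ := by
      rw [← Real.rpow_natCast |(n:ℝ)| 2, ← Real.rpow_neg (abs_nonneg _)]; norm_num
    rw [he, Real.norm_eq_abs, abs_inv, _root_.abs_of_nonneg (by positivity : (0:ℝ) ≤ |(n:ℝ)|^(2:ℕ))]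
  rw [hrpow]
  have h1 : (1:ℝ) ≤ 2 * π := by nlinarith [Real.pi_gt_three]
  have h1' : (1:ℝ) ≤ (2*π)^2 := by nlinarith
  have h2 : |(n:ℝ)|^2 ≤ (2 * π * |(n:ℝ)|)^2 := by
    calc |(n:ℝ)|^2 = 1 * |(n:ℝ)|^2 := by ring
      _ ≤ (2*π)^2 * |(n:ℝ)|^2 := mul_le_mul_of_nonneg_right h1' (sq_nonneg _)
      _ = (2*π*|(n:ℝ)|)^2 := by ring
  have hpos2 : (0:ℝ) < |(n:ℝ)|^2 := by positivity
  have hF : ‖𝓕 f n‖ ≤ C / (2 * π * |(n:ℝ)|)^2 := by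
    rw [le_div_iff₀ (by positivity)]
    linarith [hb]
  calc ‖𝓕 f ↑n‖ ≤ C / (2 * π * |(n:ℝ)|)^2 := hF
    _ ≤ C / |(n:ℝ)|^2 := by
        apply div_le_div_of_nonneg_left hC0 hpos2 h2 |>.trans_eq rfl
    _ = C * (|(n:ℝ)|^2)⁻¹ := by rw [div_eq_mul_inv]

lemma aux_poisson {f : ℝ → ℂ} (hf : ContDiff ℝ (⊤ : ℕ∞) f)
    (hsupp : HasCompactSupport f) :
    ∑' n : ℤ, f n = ∑' n : ℤ, 𝓕 f n := by
  have hzero : ∀ᶠ x in cocompact ℝ, f x = (0:ℂ) := by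
    have : (tsupport f)ᶜ ∈ cocompact ℝ :=
      mem_cocompact.mpr ⟨tsupport f, hsupp, subset_refl _⟩
    filter_upwards [this] with x hx
    exact image_eq_zero_of_notMem_tsupport hx
  have hO : f =O[cocompact ℝ] (|·| ^ (-2 : ℝ)) :=
    (Filter.EventuallyEq.trans_isBigO (by exact hzero) (Asymptotics.isBigO_zero _ _))
  have h := Real.tsum_eq_tsum_fourier_of_rpow_decay_of_summable hf.continuous
    one_lt_two hO (aux_summable_fourier hf hsupp) 0
  simpa using h

/-- **Airy–Poisson summation formula** (general strictly increasing phase `L`):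
the symmetric partial sums `∑_{N=-M}^{M} ∫ e^{-i N L(ω)} φ(ω) dω` converge to
`2π ∑_{k≥1} φ(ω_k)/L'(ω_k)`, the latter sum having finitely many nonzero terms. -/
theorem airy_poisson_summation
    (L : ℝ → ℝ) (hL : ContDiff ℝ (⊤ : ℕ∞) L)
    (hL' : ∀ x : ℝ, 0 < deriv L x)
    (hbot : Tendsto L atBot (nhds 0)) (htop : Tendsto L atTop atTop)
    (ω : ℕ → ℝ) (hω : ∀ k : ℕ, 1 ≤ k → L (ω k) = 2 * Real.pi * k)
    (φ : ℝ → ℂ) (hφ : ContDiff ℝ (⊤ : ℕ∞) φ) (hφsupp : HasCompactSupport φ) :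
    {k : ℕ | φ (ω (k + 1)) / ((deriv L (ω (k + 1)) : ℝ) : ℂ) ≠ 0}.Finite ∧
    Tendsto
      (fun M : ℕ => ∑ N ∈ Finset.Icc (-(M : ℤ)) (M : ℤ),
        ∫ x : ℝ, Complex.exp (-Complex.I * (N : ℂ) * (L x : ℂ)) * φ x)
      atTop
      (nhds ((2 * Real.pi : ℝ) *
        ∑' k : ℕ, φ (ω (k + 1)) / ((deriv L (ω (k + 1)) : ℝ) : ℂ))) := by
  classical
  have hLs : ContDiff ℝ (⊤ : ℕ∞) L := hL.of_le (by simp)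
  have hφs : ContDiff ℝ (⊤ : ℕ∞) φ := hφ.of_le (by simp)
  have hcont : Continuous L := hLs.continuous
  have hdiff : Differentiable ℝ L := hLs.differentiable (by simp)
  have hmono : StrictMono L := strictMono_of_deriv_pos hL'
  have hLpos : ∀ x, 0 < L x := by
    intro x
    have h0 : (0:ℝ) ≤ L (x - 1) :=
      le_of_tendsto hbot (by
        filter_upwards [eventually_le_atBot (x-1)] with y hy
        exact hmono.monotone hy)
    linarith [hmono (show x - 1 < x by linarith)]
  -- order isomorphism onto (0, ∞)
  let e : ℝ ≃o Set.Ioi (0:ℝ) :=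
    StrictMono.orderIsoOfSurjective _ (hmono.codRestrict hLpos) <|
      (hcont.subtype_mk _).surjective
        (by exact tendsto_Ioi_atTop.mpr htop)
        (by
          refine (tendsto_Ioi_atBot (a := (0:ℝ))).mpr ?_
          exact tendsto_nhdsWithin_of_tendsto_nhds_of_eventually_within _ hbot
            (Eventually.of_forall hLpos))
  have hemb : Topology.IsOpenEmbedding L := by
    have h1 : Topology.IsOpenEmbedding (Subtype.val : Set.Ioi (0:ℝ) → ℝ) :=
      isOpen_Ioi.isOpenEmbedding_subtypeVal
    have h2 : Topology.IsOpenEmbedding (e.toHomeomorph) := (e.toHomeomorph).isOpenEmbedding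
    exact h1.comp h2
  set P : OpenPartialHomeomorph ℝ ℝ := Topology.IsOpenEmbedding.toOpenPartialHomeomorph L hemb with hPdef
  set g : ℝ → ℝ := ⇑P.symm with hgdef
  have hPcoe : ⇑P = L := by
    rw [hPdef]; exact Topology.IsOpenEmbedding.toOpenPartialHomeomorph_apply L hemb
  have hrange : Set.range L = Set.Ioi 0 := by
    apply Set.eq_of_subset_of_subset
    · rintro y ⟨x, rfl⟩; exact hLpos x
    · rintro y hy
      obtain ⟨x, hx⟩ := e.surjective ⟨y, hy⟩
      exact ⟨x, congrArg Subtype.val hx⟩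
  have hPtarget : P.target = Set.Ioi 0 := by
    rw [hPdef, Topology.IsOpenEmbedding.toOpenPartialHomeomorph_target, hrange]
  have hgL : ∀ x, g (L x) = x := fun x =>
    Topology.IsOpenEmbedding.toOpenPartialHomeomorph_left_inv L hemb
  have hLg : ∀ y, 0 < y → L (g y) = y := fun y hy =>
    Topology.IsOpenEmbedding.toOpenPartialHomeomorph_right_inv L hemb (hrange ▸ hy)
  have hL1 : ContDiff ℝ (⊤ : ℕ∞) (deriv L) := (contDiff_infty_iff_deriv.mp hLs).2
  have hgsmooth : ∀ y : ℝ, 0 < y → ContDiffAt ℝ (⊤ : ℕ∞) g y := by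
    intro y hy
    have hyt : y ∈ P.target := by rw [hPtarget]; exact hy
    refine P.contDiffAt_symm_deriv (f₀' := deriv L (g y)) (ne_of_gt (hL' _)) hyt ?_ ?_
    · rw [hPcoe]; exact (hdiff (g y)).hasDerivAt
    · rw [hPcoe]; exact hLs.contDiffAt
  -- the transported density ψ
  set ψ : ℝ → ℂ := fun x => if 0 < x then φ (g x) * (((deriv L (g x) : ℝ)) : ℂ)⁻¹ else 0
    with hψdef
  have hψL : ∀ t, ψ (L t) = φ t * (((deriv L t : ℝ)) : ℂ)⁻¹ := by
    intro t
    rw [hψdef]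
    simp only
    rw [if_pos (hLpos t), hgL t]
  set S : Set ℝ := L '' (tsupport φ) with hSdef
  have hScomp : IsCompact S := hφsupp.image hcont
  have hSpos : ∀ s ∈ S, 0 < s := by rintro s ⟨x, -, rfl⟩; exact hLpos x
  have hsuppS : ∀ x, ψ x ≠ 0 → x ∈ S := by
    intro x hx
    rw [hψdef] at hx
    simp only at hx
    by_cases h0 : 0 < x
    · rw [if_pos h0] at hx
      have hφx : φ (g x) ≠ 0 := fun h => hx (by rw [h, zero_mul])
      exact ⟨g x, subset_tsupport _ hφx, hLg x h0⟩
    · exact absurd (if_neg h0) hx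
  have hψsupp : HasCompactSupport ψ :=
    HasCompactSupport.intro hScomp fun x hx => by
      by_contra h
      exact hx (hsuppS x h)
  set S' : Set ℝ := insert 1 S with hS'def
  have hS'comp : IsCompact S' := hScomp.insert 1
  set a : ℝ := sInf S' with hadef
  have haS' : a ∈ S' := hS'comp.sInf_mem ⟨1, Set.mem_insert 1 S⟩
  have hapos : 0 < a := by
    rcases haS' with h | h
    · rw [h]; norm_num
    · exact hSpos _ h
  have hψ0 : ∀ x, x < a → ψ x = 0 := by
    intro x hx
    by_contra h
    have : a ≤ x := csInf_le hS'comp.bddBelow (Set.mem_insert_of_mem _ (hsuppS x h))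
    linarith
  have hψc : ContDiff ℝ (⊤ : ℕ∞) ψ := by
    rw [contDiff_iff_contDiffAt]
    intro x
    rcases lt_or_ge x a with hx | hx
    · exact contDiffAt_const.congr_of_eventuallyEq
        (Filter.eventuallyEq_of_mem (Iio_mem_nhds hx) fun y hy => hψ0 y hy)
    · have hx0 : 0 < x := lt_of_lt_of_le hapos hx
      have hg := hgsmooth x hx0
      have h1 : ContDiffAt ℝ (⊤ : ℕ∞) (fun y => φ (g y)) x := (hφs.contDiffAt).comp x hg
      have h2 : ContDiffAt ℝ (⊤ : ℕ∞) (fun y => (((deriv L (g y) : ℝ)) : ℂ)) x :=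
        (Complex.ofRealCLM.contDiff.contDiffAt).comp x ((hL1.contDiffAt).comp x hg)
      have hmain := h1.mul (h2.inv (by exact_mod_cast (hL' (g x)).ne'))
      exact hmain.congr_of_eventuallyEq
        (Filter.eventuallyEq_of_mem (Ioi_mem_nhds hx0) fun y hy => by
          rw [hψdef]; simp only; rw [if_pos (Set.mem_Ioi.mp hy)]; rfl)
  -- change of variables
  have hCV : ∀ N : ℤ, (∫ x : ℝ, Complex.exp (-Complex.I * N * (L x : ℂ)) * φ x)
      = ∫ x : ℝ, Complex.exp (-Complex.I * N * (x : ℂ)) * ψ x := by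
    intro N
    have hder : ∀ x ∈ (Set.univ : Set ℝ), HasDerivWithinAt L (deriv L x) Set.univ x :=
      fun x _ => ((hdiff x).hasDerivAt).hasDerivWithinAt
    have him := integral_image_eq_integral_abs_deriv_smul MeasurableSet.univ hder
      (hmono.injective.injOn) (fun x => Complex.exp (-Complex.I * N * (x : ℂ)) * ψ x)
    rw [Set.image_univ, hrange, MeasureTheory.setIntegral_univ] at him
    have hLHS : (∫ x in Set.Ioi (0:ℝ), Complex.exp (-Complex.I * N * (x : ℂ)) * ψ x)
        = ∫ x : ℝ, Complex.exp (-Complex.I * N * (x : ℂ)) * ψ x := by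
      rw [← MeasureTheory.integral_indicator measurableSet_Ioi]
      congr 1
      funext x
      rw [Set.indicator_apply]
      split_ifs with h
      · rfl
      · rw [hψdef]; simp only
        rw [if_neg (by simpa using h), mul_zero]
    rw [hLHS] at him
    have hRHS : (fun x : ℝ => Complex.exp (-Complex.I * N * ((L x : ℝ) : ℂ)) * φ x)
        = fun x : ℝ => |deriv L x| • (Complex.exp (-Complex.I * N * ((L x : ℝ) : ℂ)) * ψ (L x)) := by
      funext x
      rw [hψL x, abs_of_pos (hL' x)]
      have hne : (((deriv L x : ℝ)) : ℂ) ≠ 0 := by exact_mod_cast (hL' x).ne'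
      rw [Complex.real_smul]
      field_simp
    rw [hRHS, ← him]
  -- rescaled function and Fourier transform
  set Φ : ℝ → ℂ := fun y => ψ (2 * Real.pi * y) with hΦdef
  have hΦc : ContDiff ℝ (⊤ : ℕ∞) Φ := hψc.comp (contDiff_const.mul contDiff_id)
  have hΦsupp : HasCompactSupport Φ := by
    have h2π : (2 * Real.pi) ≠ 0 := by positivity
    have := hψsupp.comp_homeomorph (Homeomorph.mulLeft₀ (2*Real.pi) h2π)
    exact this
  have hFT : ∀ N : ℤ, (∫ x : ℝ, Complex.exp (-Complex.I * N * (x : ℂ)) * ψ x)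
      = (2*Real.pi : ℝ) • 𝓕 Φ N := by
    intro N
    rw [Real.fourier_real_eq_integral_exp_smul]
    have hcm := MeasureTheory.Measure.integral_comp_mul_left
      (fun x : ℝ => Complex.exp (-Complex.I * N * (x : ℂ)) * ψ x) (2*Real.pi)
    have heq : (fun y : ℝ => Complex.exp (((-2 * Real.pi * y * N : ℝ)) * Complex.I) • Φ y)
        = fun y : ℝ => Complex.exp (-Complex.I * N * (((2*Real.pi*y : ℝ)) : ℂ)) * ψ (2*Real.pi*y) := by
      funext y
      rw [smul_eq_mul]
      congr 2
      push_cast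
      ring
    rw [heq]
    rw [hcm]
    rw [smul_smul]
    rw [abs_of_pos (by positivity : (0:ℝ) < (2*Real.pi)⁻¹)]
    rw [mul_inv_cancel₀ (by positivity : (2*Real.pi : ℝ) ≠ 0), one_smul]
  have hterm : ∀ N : ℤ, (∫ x : ℝ, Complex.exp (-Complex.I * N * (L x : ℂ)) * φ x)
      = (2*Real.pi : ℝ) • 𝓕 Φ N := fun N => (hCV N).trans (hFT N)
  -- values of Φ at integers
  have hΦnonpos : ∀ n : ℤ, n ≤ 0 → Φ (n : ℝ) = 0 := by
    intro n hn
    have hn' : (n:ℝ) ≤ 0 := by exact_mod_cast hn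
    have hle : (2 * Real.pi * (n:ℝ)) ≤ 0 := by nlinarith [Real.pi_pos]
    rw [hΦdef]; simp only; rw [hψdef]; simp only
    rw [if_neg (not_lt.mpr hle)]
  have hΦpos : ∀ k : ℕ, Φ (((k:ℤ)+1 : ℤ) : ℝ) = φ (ω (k+1)) * (((deriv L (ω (k+1)) : ℝ)) : ℂ)⁻¹ := by
    intro k
    have hLω : L (ω (k+1)) = 2 * Real.pi * (((k:ℤ)+1 : ℤ) : ℝ) := by
      rw [hω (k+1) (by omega)]
      push_cast
      ring
    rw [hΦdef]
    simp only
    rw [← hLω]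
    exact hψL (ω (k+1))
  -- the ℕ-indexed coefficients
  set c : ℕ → ℂ := fun k => φ (ω (k + 1)) / ((deriv L (ω (k + 1)) : ℝ) : ℂ) with hcdef
  have hc_eq : ∀ k, c k = Φ (((k:ℤ)+1 : ℤ) : ℝ) := by
    intro k
    show φ (ω (k + 1)) / ((deriv L (ω (k + 1)) : ℝ) : ℂ) = _
    rw [hΦpos k, div_eq_mul_inv]
  -- finiteness
  have hfin : {k : ℕ | c k ≠ 0}.Finite := by
    obtain ⟨B, hB⟩ := hScomp.bddAbove
    apply Set.Finite.subset (Set.finite_Icc (0:ℕ) (Nat.ceil (B / (2*Real.pi))))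
    intro k hk
    simp only [Set.mem_setOf_eq] at hk
    have hφk : φ (ω (k+1)) ≠ 0 := by
      intro h
      apply hk
      show φ (ω (k + 1)) / ((deriv L (ω (k + 1)) : ℝ) : ℂ) = 0
      rw [h, zero_div]
    have hLmem : L (ω (k+1)) ∈ S := ⟨_, subset_tsupport _ hφk, rfl⟩
    have hle : 2*Real.pi*((k:ℝ)+1) ≤ B := by
      have h := hB hLmem
      rw [hω (k+1) (by omega)] at h
      push_cast at h
      linarith
    have hk' : (k:ℝ) ≤ B/(2*Real.pi) := by
      rw [le_div_iff₀ (by positivity)]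
      nlinarith [Real.pi_pos]
    have : (k:ℝ) ≤ (Nat.ceil (B / (2*Real.pi)) : ℝ) := hk'.trans (Nat.le_ceil _)
    exact Set.mem_Icc.mpr ⟨Nat.zero_le _, by exact_mod_cast this⟩
  refine ⟨hfin, ?_⟩
  -- identify the two tsums
  have htsum_eq : ∑' n : ℤ, Φ (n : ℝ) = ∑' k : ℕ, c k := by
    have hi : Function.Injective (fun k : ℕ => (k:ℤ)+1) := fun p q h => by
      simpa using h
    have hsupp : Function.support (fun n : ℤ => Φ (n : ℝ)) ⊆
        Set.range (fun k : ℕ => (k:ℤ)+1) := by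
      intro n hn
      by_contra hr
      have hn0 : n ≤ 0 := by
        by_contra hpos
        push_neg at hpos
        refine hr ⟨(n-1).toNat, ?_⟩
        simp only
        omega
      exact hn (hΦnonpos n hn0)
    have h := hi.tsum_eq hsupp
    rw [← h]
    exact tsum_congr fun k => (hc_eq k).symm
  have hpoisson : ∑' n : ℤ, Φ (n : ℝ) = ∑' n : ℤ, 𝓕 Φ (n : ℝ) :=
    aux_poisson hΦc hΦsupp
  have hFsum : Summable fun n : ℤ => 𝓕 Φ (n : ℝ) :=
    aux_summable_fourier hΦc hΦsupp
  have hFhas : HasSum (fun n : ℤ => (2*Real.pi : ℝ) • 𝓕 Φ (n : ℝ))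
      ((2*Real.pi : ℝ) • ∑' n : ℤ, 𝓕 Φ (n : ℝ)) :=
    (hFsum.hasSum).const_smul _
  have hval : (2*Real.pi : ℝ) • (∑' n : ℤ, 𝓕 Φ (n : ℝ))
      = ((2 * Real.pi : ℝ) : ℂ) * ∑' k : ℕ, c k := by
    rw [← hpoisson, htsum_eq, Complex.real_smul]
  have hIcc : Tendsto (fun M : ℕ => Finset.Icc (-(M:ℤ)) (M:ℤ)) atTop atTop := by
    apply Filter.tendsto_atTop_finset_of_monotone
    · intro m n hmn
      exact Finset.Icc_subset_Icc (by exact_mod_cast neg_le_neg (Int.ofNat_le.mpr hmn))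
        (by exact_mod_cast hmn)
    · intro x
      refine ⟨x.natAbs, Finset.mem_Icc.mpr ⟨?_, ?_⟩⟩
      · simp only [Int.natCast_natAbs]
        exact neg_abs_le x
      · simp only [Int.natCast_natAbs]
        exact le_abs_self x
  have hsum_eq : (fun M : ℕ => ∑ N ∈ Finset.Icc (-(M : ℤ)) (M : ℤ),
        ∫ x : ℝ, Complex.exp (-Complex.I * (N : ℂ) * (L x : ℂ)) * φ x)
      = fun M : ℕ => ∑ N ∈ Finset.Icc (-(M : ℤ)) (M : ℤ),
        (2*Real.pi : ℝ) • 𝓕 Φ (N : ℝ) :=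
    funext fun M => Finset.sum_congr rfl fun N _ => hterm N
  rw [hsum_eq, ← hval]
  exact hFhas.comp hIcc
end

section
/- For all h, a ∈ (0,1], every integer n ≥ 1, and every t > 0, set t_n = 4n·√(a(1+a)). If |t − t_n| ≥ a·t_n, then a^{1/8} h^{1/4} / (n^{1/4} + h^{−1/12} a^{−1/24} |t² − t_n²|^{1/6}) ≤ 2^{1/3} (h/t)^{1/3}. -/
/-!
Off `I_n` one has `|t² - t_n²| ≥ a t² / 2`, so the second summand of the denominator alone is at
least `2^{-1/6} a^{1/8} h^{-1/12} t^{1/3}`; this already gives the bound with the constant `2^{1/6}`.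
-/

lemma mul_div_two_le_abs_sub_of_mul_le {a s t : ℝ} (ha₀ : 0 ≤ a) (ha₁ : a ≤ 1) (ht : 0 ≤ t)
    (hfar : a * s ≤ |t - s|) : a * t / 2 ≤ |t - s| := by
  rcases le_or_gt t (2 * s) with hts | hts
  · nlinarith
  · calc a * t / 2 ≤ t / 2 := by nlinarith
      _ ≤ |t - s| := by linarith [le_abs_self (t - s)]

lemma mul_sq_div_two_le_abs_sq_sub_sq {a s t : ℝ} (ha₀ : 0 ≤ a) (ha₁ : a ≤ 1)
    (ht : 0 ≤ t) (hs : 0 ≤ s) (hfar : a * s ≤ |t - s|) : a * t ^ 2 / 2 ≤ |t ^ 2 - s ^ 2| := by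
  have hsum : |t ^ 2 - s ^ 2| = |t - s| * (t + s) := by
    rw [show t ^ 2 - s ^ 2 = (t - s) * (t + s) by ring, abs_mul, abs_of_nonneg (add_nonneg ht hs)]
  rw [hsum]
  calc a * t ^ 2 / 2 = a * t / 2 * t := by ring
    _ ≤ |t - s| * (t + s) :=
      mul_le_mul (mul_div_two_le_abs_sub_of_mul_le ha₀ ha₁ ht hfar) (by linarith) ht (abs_nonneg _)

lemma rpow_ratio_eq_two_rpow_mul_div_rpow {h a t : ℝ} (hh : 0 < h) (ha : 0 < a) (ht : 0 < t) :
    a ^ ((1 : ℝ) / 8) * h ^ ((1 : ℝ) / 4) /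
        (h ^ (-(1 : ℝ) / 12) * a ^ (-(1 : ℝ) / 24) * (a * t ^ 2 / 2) ^ ((1 : ℝ) / 6))
      = 2 ^ ((1 : ℝ) / 6) * (h / t) ^ ((1 : ℝ) / 3) := by
  have hsplit_a : a ^ ((1 : ℝ) / 8) = a ^ (-(1 : ℝ) / 24) * a ^ ((1 : ℝ) / 6) := by
    rw [← Real.rpow_add ha]; norm_num
  have hsplit_h : h ^ ((1 : ℝ) / 4) = h ^ (-(1 : ℝ) / 12) * h ^ ((1 : ℝ) / 3) := by
    rw [← Real.rpow_add hh]; norm_num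
  have hroot : (a * t ^ 2 / 2) ^ ((1 : ℝ) / 6)
      = a ^ ((1 : ℝ) / 6) * t ^ ((1 : ℝ) / 3) / 2 ^ ((1 : ℝ) / 6) := by
    rw [Real.div_rpow (by positivity) zero_le_two, Real.mul_rpow ha.le (by positivity),
      ← Real.rpow_natCast t 2, ← Real.rpow_mul ht.le]
    norm_num
  rw [hsplit_a, hsplit_h, hroot, Real.div_rpow hh.le ht.le]
  field_simp

theorem swallowtail_factor_outside_In_general
    (h a : ℝ) (hh : h ∈ Set.Ioc (0 : ℝ) 1) (ha : a ∈ Set.Ioc (0 : ℝ) 1)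
    (n : ℕ) (t : ℝ) (ht : 0 < t)
    (tn : ℝ) (htn : tn = 4 * n * Real.sqrt (a * (1 + a)))
    (hfar : a * tn ≤ |t - tn|) :
    a ^ ((1 : ℝ) / 8) * h ^ ((1 : ℝ) / 4) /
        ((n : ℝ) ^ ((1 : ℝ) / 4)
          + h ^ (-(1 : ℝ) / 12) * a ^ (-(1 : ℝ) / 24) * |t ^ 2 - tn ^ 2| ^ ((1 : ℝ) / 6))
      ≤ 2 ^ ((1 : ℝ) / 3) * (h / t) ^ ((1 : ℝ) / 3) := by
  obtain ⟨hh₀, -⟩ := hh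
  obtain ⟨ha₀, ha₁⟩ := ha
  have htn₀ : 0 ≤ tn := htn ▸ by positivity
  have hsep := mul_sq_div_two_le_abs_sq_sub_sq ha₀.le ha₁ ht.le htn₀ hfar
  calc _ ≤ a ^ ((1 : ℝ) / 8) * h ^ ((1 : ℝ) / 4) /
        (h ^ (-(1 : ℝ) / 12) * a ^ (-(1 : ℝ) / 24) * (a * t ^ 2 / 2) ^ ((1 : ℝ) / 6)) := by
        gcongr
        exact le_add_of_nonneg_of_le (by positivity) (by gcongr)
    _ = 2 ^ ((1 : ℝ) / 6) * (h / t) ^ ((1 : ℝ) / 3) := rpow_ratio_eq_two_rpow_mul_div_rpow hh₀ ha₀ ht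
    _ ≤ 2 ^ ((1 : ℝ) / 3) * (h / t) ^ ((1 : ℝ) / 3) := by gcongr <;> norm_num

/-- Away from the swallowtail times `t_n = 4n√(a(1+a))`, i.e. when `|t − t_n| ≥ a t_n`,
the swallowtail factor `a^{1/8}h^{1/4}/(n^{1/4} + h^{-1/12}a^{-1/24}|t² − t_n²|^{1/6})`
is bounded by `2^{1/3} (h/t)^{1/3}`. -/
theorem swallowtail_factor_outside_In
    (h a : ℝ) (hh : h ∈ Set.Ioc (0 : ℝ) 1) (ha : a ∈ Set.Ioc (0 : ℝ) 1)
    (n : ℕ) (hn : 1 ≤ n) (t : ℝ) (ht : 0 < t)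
    (tn : ℝ) (htn : tn = 4 * n * Real.sqrt (a * (1 + a)))
    (hfar : a * tn ≤ |t - tn|) :
    a ^ ((1 : ℝ) / 8) * h ^ ((1 : ℝ) / 4) /
        ((n : ℝ) ^ ((1 : ℝ) / 4)
          + h ^ (-(1 : ℝ) / 12) * a ^ (-(1 : ℝ) / 24) * |t ^ 2 - tn ^ 2| ^ ((1 : ℝ) / 6))
      ≤ 2 ^ ((1 : ℝ) / 3) * (h / t) ^ ((1 : ℝ) / 3) :=
  swallowtail_factor_outside_In_general h a hh ha n t ht tn htn hfar
end

section
/- Let u : ℝ → ℂ be a C² function satisfying u''(ω) + ω·u(ω) = 0 for all ω, with u(ω) ≠ 0 for every ω. Then the quantity Im(u'(ω)·conj(u(ω))) is constant in ω; call it W. Moreover, if L : ℝ → ℝ is differentiable and satisfies e^{−iL(ω)} = −conj(u(ω))/u(ω) for all ω, then L'(ω) = 2W/|u(ω)|² for every ω; in particular, if W > 0 then L is strictly increasing on ℝ. -/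
/-!
Since `ω` is real, `u'' ū = -ω |u|²` is real, so `Im (u' ū)`, whose derivative is
`Im (u'' ū + |u'|²)`, is constant. Differentiating `e^{-iL} u = -ū` and multiplying by `u`
turns the phase equation into `i L' |u|² = ū u' - u ū' = 2i Im (u' ū)`.
-/

open Complex ComplexConjugate Filter Topology

theorem hasDerivAt_im_deriv_mul_conj {u : ℝ → ℂ} {u'' : ℂ} {x : ℝ}
    (hu : DifferentiableAt ℝ u x) (hu' : HasDerivAt (deriv u) u'' x) :
    HasDerivAt (fun y => (deriv u y * conj (u y)).im) (u'' * conj (u x)).im x := by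
  have hprod : HasDerivAt (fun y => deriv u y * conj (u y))
      (u'' * conj (u x) + deriv u x * conj (deriv u x)) x := by
    simpa [Pi.mul_def] using hu'.mul hu.hasDerivAt.star
  have hsq : (deriv u x * conj (deriv u x)).im = 0 := by
    rw [mul_conj, ofReal_im]
  simpa only [Function.comp_def, imCLM_apply, add_im, hsq, add_zero] using
    imCLM.hasFDerivAt.comp_hasDerivAt x hprod

theorem im_deriv_mul_conj_eq_of_deriv_deriv_add_mul_eq_zero {u : ℝ → ℂ} {q : ℝ → ℝ}
    (hu : Differentiable ℝ u) (hu' : Differentiable ℝ (deriv u))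
    (hode : ∀ x, deriv (deriv u) x + q x * u x = 0) (x y : ℝ) :
    (deriv u x * conj (u x)).im = (deriv u y * conj (u y)).im := by
  have hderiv (z : ℝ) := hasDerivAt_im_deriv_mul_conj (hu z) (hu' z).hasDerivAt
  refine is_const_of_deriv_eq_zero (fun z => (hderiv z).differentiableAt) (fun z => ?_) x y
  rw [(hderiv z).deriv, eq_neg_of_add_eq_zero_left (hode z), neg_mul, mul_assoc, mul_conj,
    ← ofReal_mul, neg_im, ofReal_im, neg_zero]

theorem mul_sq_norm_eq_two_mul_im_of_exp_mul_eq_neg_conj {u : ℝ → ℂ} {L : ℝ → ℝ} {u' : ℂ}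
    {L' x : ℝ} (hL : HasDerivAt L L' x) (hu : HasDerivAt u u' x)
    (hphase : ∀ᶠ y in 𝓝 x, exp (-I * L y) * u y = -conj (u y)) :
    L' * ‖u x‖ ^ 2 = 2 * (u' * conj (u x)).im := by
  have hlhs : HasDerivAt (fun y => exp (-I * L y) * u y)
      (exp (-I * L x) * (-I * L') * u x + exp (-I * L x) * u') x :=
    (hL.ofReal_comp.const_mul (-I)).cexp.mul hu
  have hrhs : HasDerivAt (fun y => -conj (u y)) (-conj u') x := hu.star.neg
  have hdiff := hlhs.unique (hrhs.congr_of_eventuallyEq hphase)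
  have hx : exp (-I * L x) * u x = -conj (u x) := hphase.self_of_nhds
  have hkey : I * L' * (u x * conj (u x)) = conj (u x) * u' - u x * conj u' := by
    linear_combination (u x) * hdiff - (-I * L' * u x + u') * hx
  have him := congrArg im hkey
  rw [mul_conj] at him
  rw [Complex.sq_norm, normSq_apply]
  simp only [mul_im, mul_re, I_re, I_im, ofReal_re, ofReal_im, conj_re, conj_im, sub_im,
    normSq_apply] at him ⊢
  linarith

/-- Wronskian monotonicity: if `u'' + ωu = 0` with `u` nonvanishing, then
`W = Im(u'(ω) conj(u(ω)))` is constant; and any differentiable `L : ℝ → ℝ` with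
`e^{-iL(ω)} = −conj(u(ω))/u(ω)` satisfies `L'(ω) = 2W/|u(ω)|²`, so `L` is strictly
increasing when `W > 0`. -/
theorem wronskian_constant_and_L_strictMono
    (u : ℝ → ℂ) (hu : ContDiff ℝ 2 u)
    (hode : ∀ ω : ℝ, deriv (deriv u) ω + (ω : ℂ) * u ω = 0)
    (hne : ∀ ω : ℝ, u ω ≠ 0) :
    ∃ W : ℝ,
      (∀ ω : ℝ, (deriv u ω * starRingEnd ℂ (u ω)).im = W) ∧
      ∀ L : ℝ → ℝ, Differentiable ℝ L →
        (∀ ω : ℝ, Complex.exp (-Complex.I * (L ω : ℂ)) = -(starRingEnd ℂ (u ω)) / u ω) →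
        (∀ ω : ℝ, deriv L ω = 2 * W / ‖u ω‖ ^ 2) ∧
        (0 < W → StrictMono L) := by
  have hud : Differentiable ℝ u := hu.differentiable (by norm_num)
  have hud' : Differentiable ℝ (deriv u) :=
    ((contDiff_succ_iff_deriv (n := 1)).mp hu).2.2.differentiable one_ne_zero
  have hW (ω : ℝ) :=
    im_deriv_mul_conj_eq_of_deriv_deriv_add_mul_eq_zero (q := id) hud hud' hode ω 0
  refine ⟨_, hW, fun L hL hexp => ?_⟩
  have hnorm (ω : ℝ) : 0 < ‖u ω‖ := norm_pos_iff.mpr (hne ω)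
  have hphase (ω : ℝ) : exp (-I * L ω) * u ω = -conj (u ω) := by
    rw [hexp ω, div_mul_cancel₀ _ (hne ω)]
  have hderiv (ω : ℝ) : deriv L ω = 2 * (deriv u 0 * conj (u 0)).im / ‖u ω‖ ^ 2 := by
    rw [eq_div_iff (pow_pos (hnorm ω) 2).ne', ← hW ω]
    exact mul_sq_norm_eq_two_mul_im_of_exp_mul_eq_neg_conj (hL ω).hasDerivAt (hud ω).hasDerivAt
      (.of_forall hphase)
  refine ⟨hderiv, fun hWpos => strictMono_of_deriv_pos fun ω => ?_⟩
  rw [hderiv ω]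
  exact div_pos (by positivity) (pow_pos (hnorm ω) 2)
end
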